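/- arXiv:2210.15249 — 2 statements merged into one kernel-verified Lean document; each statement's English description precedes it below -/
import Mathlib

section
/- Let X be a non-trivial connected graph such that (1) every edge of X lies on a triangle, (2) for every vertex x, every vertex at distance 2 from x has a neighbour at distance 3 from x, and every vertex at distance 3 from x has a neighbour at distance 4 from x. Then X is stable. -/
open SimpleGraph

/-- The canonical double cover `BX = X × K₂` of a graph `X`:
vertex set `V × Bool`, with `(x,i)` adjacent to `(y,j)` iff `x ~ y` in `X` and `i ≠ j`. -/
def doubleCover {V : Type*} (X : SimpleGraph V) : SimpleGraph (V × Bool) where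
  Adj p q := X.Adj p.1 q.1 ∧ p.2 ≠ q.2
  symm := ⟨fun p q h => ⟨X.adj_symm h.1, Ne.symm h.2⟩⟩
  loopless := ⟨fun p h => h.2 rfl⟩

/-- An automorphism of `BX` is *expected* if it lies in the subgroup generated by the
lifts of automorphisms of `X` and the coordinate swap `τ`, i.e. it has the form
`(x,i) ↦ (φ x, i + b)` for some automorphism `φ` of `X` and some `b`. -/
def IsExpected {V : Type*} (X : SimpleGraph V) (α : doubleCover X ≃g doubleCover X) : Prop :=
  ∃ (φ : X ≃g X) (b : Bool), ∀ p : V × Bool, α p = (φ p.1, xor p.2 b)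

/-- A graph is *stable* if every automorphism of its canonical double cover is expected. -/
def IsStable {V : Type*} (X : SimpleGraph V) : Prop :=
  ∀ α : doubleCover X ≃g doubleCover X, IsExpected X α

/-- A graph is *twin-free* if distinct vertices have distinct neighbourhoods. -/
def TwinFree {V : Type*} (X : SimpleGraph V) : Prop :=
  ∀ u v : V, X.neighborSet u = X.neighborSet v → u = v

/-
In the double cover the two lifts `(x, i)` and `(x, !i)` of a vertex are at distance 3: a
triangle through `x` lifts to a walk of length 3 between them, and parity rules out distance 1.
The distance conditions on `X` make this a metric characterisation: if `q` is at distance 3 from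
`p` but lies over another vertex, then `q` has a neighbour at distance 4 from `p`, while every
neighbour of `(x, !i)` is within distance 2 of `(x, i)`. Hence every automorphism of the double
cover commutes with `τ`, and connectivity of `X` then forces it to be the lift of an automorphism
of `X`, possibly composed with `τ`.
-/

namespace SimpleGraph

variable {V W : Type*} {G : SimpleGraph V} {G' : SimpleGraph W}

lemma Hom.edist_map_le (f : G →g G') (u v : V) : G'.edist (f u) (f v) ≤ G.edist u v := by
  by_cases h : G.Reachable u v
  · obtain ⟨w, hw⟩ := h.exists_walk_length_eq_edist
    simpa [hw] using edist_le (w.map f)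
  · simp [edist_eq_top_of_not_reachable h]

lemma Iso.dist_map (f : G ≃g G') (u v : V) : G'.dist (f u) (f v) = G.dist u v := by
  have hle : G'.edist (f u) (f v) ≤ G.edist u v := f.toHom.edist_map_le u v
  have hge : G.edist u v ≤ G'.edist (f u) (f v) := by
    simpa using f.symm.toHom.edist_map_le (f u) (f v)
  rw [dist, dist, le_antisymm hle hge]

lemma Reachable.dist_map_le {u v : V} (h : G.Reachable u v) (f : G →g G') :
    G'.dist (f u) (f v) ≤ G.dist u v := by
  obtain ⟨w, hw⟩ := h.exists_walk_length_eq_dist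
  simpa [hw] using dist_le (w.map f)

def EdgesInTriangles (G : SimpleGraph V) : Prop :=
  ∀ u v : V, G.Adj u v → ∃ w : V, G.Adj u w ∧ G.Adj v w

lemma EdgesInTriangles.exists_walk_length_three [Nontrivial V] (htri : G.EdgesInTriangles)
    (hG : G.Preconnected) (x : V) : ∃ w : G.Walk x x, w.length = 3 := by
  obtain ⟨y, hxy⟩ := hG.exists_adj_of_nontrivial x
  obtain ⟨z, hxz, hyz⟩ := htri x y hxy
  exact ⟨.cons hxy (.cons hyz (.cons hxz.symm .nil)), rfl⟩

end SimpleGraph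

namespace doubleCover

variable {V : Type*} {X : SimpleGraph V}

@[simp]
lemma adj_iff {p q : V × Bool} : (doubleCover X).Adj p q ↔ X.Adj p.1 q.1 ∧ p.2 ≠ q.2 :=
  Iff.rfl

-- the coordinate swap `τ`
def swap (p : V × Bool) : V × Bool := (p.1, !p.2)

variable (X) in
def fst : doubleCover X →g X := ⟨Prod.fst, And.left⟩

lemma eq_snd_iff_even_length {p q : V × Bool} (w : (doubleCover X).Walk p q) :
    p.2 = q.2 ↔ Even w.length := by
  induction w with
  | nil => simp
  | @cons u v w h _ ih =>
    rw [Walk.length_cons, Nat.even_add_one, ← ih]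
    have huv : u.2 ≠ v.2 := h.2
    revert huv
    cases u.2 <;> cases v.2 <;> cases w.2 <;> decide

lemma exists_walk_length_eq {x y : V} (w : X.Walk x y) {i j : Bool} (h : i = j ↔ Even w.length) :
    ∃ w' : (doubleCover X).Walk (x, i) (y, j), w'.length = w.length := by
  induction w generalizing i with
  | nil =>
    obtain rfl : i = j := h.mpr (by simp)
    exact ⟨Walk.nil, rfl⟩
  | @cons a b c hab w ih =>
    rw [Walk.length_cons, Nat.even_add_one] at h
    have h' : (!i) = j ↔ Even w.length := by
      rw [← not_iff_not, ← h]
      cases i <;> cases j <;> decide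
    obtain ⟨w', hw'⟩ := ih h'
    exact ⟨Walk.cons (show (doubleCover X).Adj (a, i) (b, !i) by simp [hab]) w', by simp [hw']⟩

lemma dist_le_length {x y : V} (w : X.Walk x y) {i j : Bool} (h : i = j ↔ Even w.length) :
    (doubleCover X).dist (x, i) (y, j) ≤ w.length := by
  obtain ⟨w', hw'⟩ := exists_walk_length_eq w h
  exact hw' ▸ dist_le w'

lemma eq_snd_iff_even_dist {p q : V × Bool} (h : (doubleCover X).Reachable p q) :
    p.2 = q.2 ↔ Even ((doubleCover X).dist p q) := by
  obtain ⟨w, hw⟩ := h.exists_walk_length_eq_dist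
  exact hw ▸ eq_snd_iff_even_length w

lemma dist_fst_le {p q : V × Bool} (h : (doubleCover X).Reachable p q) :
    X.dist p.1 q.1 ≤ (doubleCover X).dist p q :=
  h.dist_map_le (fst X)

lemma isExpected_of_forall_eq (α : doubleCover X ≃g doubleCover X) (f : V → V) (b : Bool)
    (hα : ∀ p, α p = (f p.1, xor p.2 b)) : IsExpected X α := by
  have hf : Function.Bijective f := by
    refine ⟨fun x y hxy => ?_, fun y => ?_⟩
    · have h := α.injective (a₁ := (x, false)) (a₂ := (y, false)) (by rw [hα, hα, hxy])
      simpa using h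
    · obtain ⟨p, hp⟩ := α.surjective (y, b)
      exact ⟨p.1, by simpa [hα] using congrArg Prod.fst hp⟩
  refine ⟨⟨Equiv.ofBijective f hf, fun {x y} => ?_⟩, b, hα⟩
  have h := α.map_adj_iff (v := (x, false)) (w := (y, true))
  simpa [hα] using h

lemma isExpected_of_map_swap (hX : X.Connected) (α : doubleCover X ≃g doubleCover X)
    (hα : ∀ p, α (swap p) = swap (α p)) : IsExpected X α := by
  obtain ⟨x₀⟩ := hX.nonempty
  have hadj : ∀ x y, X.Adj x y → (α (x, false)).2 = (α (y, false)).2 := by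
    intro x y hxy
    have h := (α.map_adj_iff.mpr (show (doubleCover X).Adj (x, false) (y, true) by simp [hxy])).2
    rw [show ((y, true) : V × Bool) = swap (y, false) from rfl, hα] at h
    simpa [swap] using h
  have hconst : ∀ x, (α (x, false)).2 = (α (x₀, false)).2 := fun x => by
    obtain ⟨w⟩ := hX.preconnected x x₀
    induction w with
    | nil => rfl
    | cons h _ ih => exact (hadj _ _ h).trans ih
  refine isExpected_of_forall_eq α (fun x => (α (x, false)).1) (α (x₀, false)).2 ?_
  rintro ⟨x, _ | _⟩
  · simp [← hconst x]
  · rw [show ((x, true) : V × Bool) = swap (x, false) from rfl, hα]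
    simp [swap, ← hconst x]

lemma exists_walk_eq_iff_even [Nontrivial V] (htri : X.EdgesInTriangles) (hX : X.Preconnected)
    (x y : V) (i j : Bool) : ∃ w : X.Walk x y, (i = j ↔ Even w.length) := by
  obtain ⟨w⟩ := hX x y
  by_cases hw : i = j ↔ Even w.length
  · exact ⟨w, hw⟩
  · obtain ⟨t, ht⟩ := htri.exists_walk_length_three hX x
    refine ⟨t.append w, ?_⟩
    have h3 : ¬Even 3 := by decide
    rw [Walk.length_append, ht, Nat.even_add]
    tauto

lemma connected [Nontrivial V] (htri : X.EdgesInTriangles) (hX : X.Preconnected) :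
    (doubleCover X).Connected where
  preconnected p q := by
    obtain ⟨w, hw⟩ := exists_walk_eq_iff_even htri hX p.1 q.1 p.2 q.2
    obtain ⟨w', -⟩ := exists_walk_length_eq w hw
    exact ⟨w'⟩

lemma dist_swap [Nontrivial V] (htri : X.EdgesInTriangles) (hX : X.Preconnected)
    (p : V × Bool) : (doubleCover X).dist p (swap p) = 3 := by
  obtain ⟨t, ht⟩ := htri.exists_walk_length_three hX p.1
  have hle : (doubleCover X).dist p (swap p) ≤ 3 :=
    ht ▸ dist_le_length t (by simp [ht]; decide)
  have hodd : ¬Even ((doubleCover X).dist p (swap p)) := fun h => by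
    simpa [swap] using (eq_snd_iff_even_dist ((connected htri hX).preconnected p (swap p))).mpr h
  have hne : (doubleCover X).dist p (swap p) ≠ 1 := fun h => by
    simpa [swap] using dist_eq_one_iff_adj.mp h
  rw [Nat.not_even_iff] at hodd
  omega

lemma dist_le_two_of_adj (htri : X.EdgesInTriangles) {x y : V} (h : X.Adj x y) (i : Bool) :
    (doubleCover X).dist (x, i) (y, i) ≤ 2 := by
  obtain ⟨z, hxz, hyz⟩ := htri x y h
  exact dist_le_length (.cons hxz (.cons hyz.symm .nil)) (by simp)

lemma exists_adj_dist_eq_four [Nontrivial V] (htri : X.EdgesInTriangles) (hX : X.Preconnected)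
    (h2 : ∀ x y : V, X.dist x y = 2 → ∃ z : V, X.Adj y z ∧ X.dist x z = 3)
    (h3 : ∀ x y : V, X.dist x y = 3 → ∃ z : V, X.Adj y z ∧ X.dist x z = 4)
    {p q : V × Bool} (hpq : p.1 ≠ q.1) (hd : (doubleCover X).dist p q = 3) :
    ∃ r, (doubleCover X).Adj q r ∧ (doubleCover X).dist p r = 4 := by
  have hB := connected htri hX
  have hsnd : p.2 ≠ q.2 := fun h =>
    absurd ((eq_snd_iff_even_dist (hB.preconnected p q)).mp h) (by rw [hd]; decide)
  have hle : X.dist p.1 q.1 ≤ 3 := hd ▸ dist_fst_le (hB.preconnected p q)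
  have hpos : 0 < X.dist p.1 q.1 := (hX p.1 q.1).pos_dist_of_ne hpq
  have hne : X.dist p.1 q.1 ≠ 1 := fun h => by
    have hadj : (doubleCover X).Adj p q := ⟨dist_eq_one_iff_adj.mp h, hsnd⟩
    have := dist_eq_one_iff_adj.mpr hadj
    omega
  obtain ⟨z, hqz, hz⟩ : ∃ z, X.Adj q.1 z ∧ 3 ≤ X.dist p.1 z := by
    rcases (by omega : X.dist p.1 q.1 = 2 ∨ X.dist p.1 q.1 = 3) with h | h
    · obtain ⟨z, hqz, hz⟩ := h2 _ _ h
      exact ⟨z, hqz, hz.ge⟩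
    · obtain ⟨z, hqz, hz⟩ := h3 _ _ h
      exact ⟨z, hqz, by omega⟩
  have hqr : (doubleCover X).Adj q (z, p.2) := ⟨hqz, Ne.symm hsnd⟩
  refine ⟨(z, p.2), hqr, ?_⟩
  have hub : (doubleCover X).dist p (z, p.2) ≤ 4 := by
    have := hB.dist_triangle (u := p) (v := q) (w := (z, p.2))
    rw [hd, dist_eq_one_iff_adj.mpr hqr] at this
    exact this
  have hlb : 3 ≤ (doubleCover X).dist p (z, p.2) :=
    hz.trans (dist_fst_le (p := p) (hB.preconnected _ (z, p.2)))
  have heven := (eq_snd_iff_even_dist (hB.preconnected p (z, p.2))).mp rfl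
  rw [Nat.even_iff] at heven
  omega

lemma eq_swap_iff [Nontrivial V] (htri : X.EdgesInTriangles) (hX : X.Preconnected)
    (h2 : ∀ x y : V, X.dist x y = 2 → ∃ z : V, X.Adj y z ∧ X.dist x z = 3)
    (h3 : ∀ x y : V, X.dist x y = 3 → ∃ z : V, X.Adj y z ∧ X.dist x z = 4)
    {p q : V × Bool} :
    q = swap p ↔ (doubleCover X).dist p q = 3 ∧
      ∀ r, (doubleCover X).Adj q r → (doubleCover X).dist p r < 4 := by
  constructor
  · rintro rfl
    refine ⟨dist_swap htri hX p, fun r hr => ?_⟩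
    have hr2 : r = (r.1, p.2) := Prod.ext rfl (by simpa [swap] using hr.2.symm)
    rw [hr2]
    exact (dist_le_two_of_adj htri (x := p.1) hr.1 p.2).trans_lt (by norm_num)
  · rintro ⟨hd, hfar⟩
    by_cases hpq : p.1 = q.1
    · have hsnd : p.2 ≠ q.2 := fun h => absurd
        ((eq_snd_iff_even_dist ((connected htri hX).preconnected p q)).mp h) (by rw [hd]; decide)
      exact Prod.ext hpq.symm (Bool.eq_not.mpr hsnd.symm)
    · obtain ⟨r, hr, hr4⟩ := exists_adj_dist_eq_four htri hX h2 h3 hpq hd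
      exact absurd (hfar r hr) (by omega)

lemma map_swap [Nontrivial V] (htri : X.EdgesInTriangles) (hX : X.Preconnected)
    (h2 : ∀ x y : V, X.dist x y = 2 → ∃ z : V, X.Adj y z ∧ X.dist x z = 3)
    (h3 : ∀ x y : V, X.dist x y = 3 → ∃ z : V, X.Adj y z ∧ X.dist x z = 4)
    (α : doubleCover X ≃g doubleCover X) (p : V × Bool) : α (swap p) = swap (α p) := by
  have hp := (eq_swap_iff htri hX h2 h3 (p := p)).mp rfl
  refine (eq_swap_iff htri hX h2 h3).mpr ⟨(α.dist_map _ _).trans hp.1, fun r hr => ?_⟩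
  obtain ⟨r, rfl⟩ := α.surjective r
  rw [α.dist_map]
  exact hp.2 r (α.map_adj_iff.mp hr)

end doubleCover

theorem stable_of_triangles_and_distance_conditions_general {V : Type*} [Nontrivial V]
    (X : SimpleGraph V) (hconn : X.Connected)
    (htri : ∀ u v : V, X.Adj u v → ∃ w : V, X.Adj u w ∧ X.Adj v w)
    (h2 : ∀ x y : V, X.dist x y = 2 → ∃ z : V, X.Adj y z ∧ X.dist x z = 3)
    (h3 : ∀ x y : V, X.dist x y = 3 → ∃ z : V, X.Adj y z ∧ X.dist x z = 4) :
    IsStable X := fun α =>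
  doubleCover.isExpected_of_map_swap hconn α
    (doubleCover.map_swap htri hconn.preconnected h2 h3 α)

theorem stable_of_triangles_and_distance_conditions {V : Type*} [Fintype V] [Nontrivial V]
    (X : SimpleGraph V) (hconn : X.Connected)
    (htri : ∀ u v : V, X.Adj u v → ∃ w : V, X.Adj u w ∧ X.Adj v w)
    (h2 : ∀ x y : V, X.dist x y = 2 → ∃ z : V, X.Adj y z ∧ X.dist x z = 3)
    (h3 : ∀ x y : V, X.dist x y = 3 → ∃ z : V, X.Adj y z ∧ X.dist x z = 4) :
    IsStable X :=
  stable_of_triangles_and_distance_conditions_general X hconn htri h2 h3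
end

section
/- Let X be a strongly regular graph with parameters (n,k,λ,μ) such that k > μ, μ ≠ λ, and λ ≥ 1. Then X is stable. -/
open SimpleGraph

/-!
Since `λ ≥ 1` and `X` has diameter 2, any two distinct vertices of `X` have a common neighbour.
Hence two vertices of `BX` lie in the same fibre `V × {i}` iff they are equal or have a common
neighbour, so an automorphism `α` of `BX` maps fibres to fibres: `α (x, i) = (fᵢ x, i xor b)`
with `f₀ x ~ f₁ y ↔ x ~ y`. Then `f₁` maps the common neighbours of `x, y` onto those of
`f₀ x, f₀ y`; as `λ ≠ μ`, this number decides adjacency, so `f₀` is an automorphism of `X`.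
Finally `f₀ y` and `f₁ y` have the same neighbourhood, and `μ < k` rules out twins, so `f₀ = f₁`.
-/

namespace SimpleGraph

variable {V W : Type*} {X : SimpleGraph V}

theorem Iso.commonNeighbors_nonempty_iff {G : SimpleGraph W} (α : X ≃g G) {u v : V} :
    (G.commonNeighbors (α u) (α v)).Nonempty ↔ (X.commonNeighbors u v).Nonempty := by
  constructor
  · rintro ⟨w, hw⟩
    exact ⟨α.symm w, by rwa [mem_commonNeighbors, ← α.map_adj_iff, ← α.map_adj_iff,
      α.apply_symm_apply]⟩
  · rintro ⟨w, hw⟩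
    exact ⟨α w, by rwa [mem_commonNeighbors, α.map_adj_iff, α.map_adj_iff]⟩

theorem ediam_eq_of_diam_eq {d : ℕ} (hd : d ≠ 0) (h : X.diam = d) : X.ediam = d := by
  rw [← h, diam, ENat.natCast_toNat (ediam_ne_top_of_diam_ne_zero (h ▸ hd))]

theorem commonNeighbors_nonempty_of_ediam_le_two (hd : X.ediam ≤ 2) {u v : V} (huv : u ≠ v)
    (hnadj : ¬X.Adj u v) : (X.commonNeighbors u v).Nonempty := by
  by_contra hcn
  rw [Set.not_nonempty_iff_eq_empty] at hcn
  exact (two_lt_edist_iff.mpr ⟨huv, hnadj, hcn⟩).not_ge (edist_le_ediam.trans hd)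

theorem IsSRGWith.commonNeighbors_nonempty [Fintype V] [DecidableRel X.Adj] {n k l m : ℕ}
    (h : X.IsSRGWith n k l m) (hl : 0 < l) (hd : X.ediam ≤ 2) {u v : V} (huv : u ≠ v) :
    (X.commonNeighbors u v).Nonempty := by
  by_cases hadj : X.Adj u v
  · rw [← Set.toFinset_nonempty, ← Finset.card_pos, Set.toFinset_card, h.of_adj u v hadj]
    exact hl
  · exact commonNeighbors_nonempty_of_ediam_le_two hd huv hadj

theorem IsSRGWith.adj_iff_card_commonNeighbors_eq [Fintype V] [DecidableRel X.Adj] {n k l m : ℕ}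
    (h : X.IsSRGWith n k l m) (hlm : l ≠ m) {u v : V} (huv : u ≠ v) :
    X.Adj u v ↔ Fintype.card (X.commonNeighbors u v) = l := by
  refine ⟨h.of_adj u v, fun hc => ?_⟩
  by_contra hnadj
  exact hlm (hc.symm.trans (h.of_not_adj huv hnadj))

theorem IsSRGWith.twinFree [Fintype V] [DecidableRel X.Adj] {n k l m : ℕ}
    (h : X.IsSRGWith n k l m) (hmk : m ≠ k) : TwinFree X := by
  intro u v huv
  by_contra huv'
  have hnadj : ¬X.Adj u v := fun hadj => X.irrefl (show v ∈ X.neighborSet v from huv ▸ hadj)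
  have hcard := h.of_not_adj huv' hnadj
  simp only [commonNeighbors_eq, huv, Set.inter_self] at hcard
  rw [card_neighborSet_eq_degree, h.regular.degree_eq] at hcard
  exact hmk hcard.symm

/-- A two-fold automorphism in the sense of Lauri, Mizzi and Scapellato. -/
def IsTwoFoldAut (X : SimpleGraph V) (f g : V → V) : Prop :=
  ∀ x y, X.Adj (f x) (g y) ↔ X.Adj x y

namespace IsTwoFoldAut

variable {f g : V → V}

theorem card_commonNeighbors [Fintype V] [DecidableRel X.Adj] (h : IsTwoFoldAut X f g)
    (hg : Function.Bijective g) (x y : V) :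
    Fintype.card (X.commonNeighbors (f x) (f y)) = Fintype.card (X.commonNeighbors x y) := by
  have hmem : ∀ z, z ∈ X.commonNeighbors x y ↔ g z ∈ X.commonNeighbors (f x) (f y) := by
    intro z
    simp only [mem_commonNeighbors, h x z, h y z]
  exact (Fintype.card_congr (Equiv.subtypeEquiv (Equiv.ofBijective g hg) hmem)).symm

theorem eq_of_twinFree (hX : TwinFree X) (h : IsTwoFoldAut X f g) (hf : Function.Surjective f)
    (hff : ∀ x y, X.Adj (f x) (f y) ↔ X.Adj x y) : g = f := by
  funext y
  refine hX _ _ (Set.ext fun u => ?_)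
  obtain ⟨x, rfl⟩ := hf u
  rw [mem_neighborSet, mem_neighborSet, X.adj_comm, h, hff, X.adj_comm]

end IsTwoFoldAut

theorem IsSRGWith.adj_iff_of_isTwoFoldAut [Fintype V] [DecidableRel X.Adj] {n k l m : ℕ}
    (h : X.IsSRGWith n k l m) (hlm : l ≠ m) {f g : V → V} (htwo : IsTwoFoldAut X f g)
    (hf : Function.Injective f) (hg : Function.Bijective g) (x y : V) :
    X.Adj (f x) (f y) ↔ X.Adj x y := by
  rcases eq_or_ne x y with rfl | hxy
  · simp only [SimpleGraph.irrefl]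
  · rw [h.adj_iff_card_commonNeighbors_eq hlm (hf.ne hxy),
      h.adj_iff_card_commonNeighbors_eq hlm hxy, htwo.card_commonNeighbors hg]

theorem doubleCover_snd_eq_iff (hX : ∀ u v : V, u ≠ v → (X.commonNeighbors u v).Nonempty)
    (p q : V × Bool) :
    p.2 = q.2 ↔ p = q ∨ ((doubleCover X).commonNeighbors p q).Nonempty := by
  constructor
  · intro h
    by_cases hpq : p = q
    · exact Or.inl hpq
    · obtain ⟨w, hpw, hqw⟩ := hX p.1 q.1 fun h1 => hpq (Prod.ext h1 h)
      exact Or.inr ⟨(w, !p.2), ⟨hpw, by simp⟩, ⟨hqw, by simp [h]⟩⟩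
  · rintro (rfl | ⟨r, ⟨-, hpr⟩, ⟨-, hqr⟩⟩)
    · rfl
    · revert hpr hqr
      cases p.2 <;> cases q.2 <;> cases r.2 <;> decide

theorem exists_snd_apply_eq_xor (hX : ∀ u v : V, u ≠ v → (X.commonNeighbors u v).Nonempty)
    (α : doubleCover X ≃g doubleCover X) : ∃ b, ∀ p, (α p).2 = xor p.2 b := by
  have hside : ∀ p q, (α p).2 = (α q).2 ↔ p.2 = q.2 := fun p q => by
    rw [doubleCover_snd_eq_iff hX, doubleCover_snd_eq_iff hX, α.injective.eq_iff,
      α.commonNeighbors_nonempty_iff]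
  rcases isEmpty_or_nonempty V with hV | ⟨⟨x₀⟩⟩
  · exact ⟨false, fun p => isEmptyElim p.1⟩
  · refine ⟨(α (x₀, false)).2, fun p => ?_⟩
    have := hside p (x₀, false)
    revert this
    cases (α p).2 <;> cases p.2 <;> cases (α (x₀, false)).2 <;> simp

def fiberMap (α : doubleCover X ≃g doubleCover X) (i : Bool) (x : V) : V :=
  (α (x, i)).1

variable (α : doubleCover X ≃g doubleCover X) {b : Bool}

theorem fiberMap_injective (hb : ∀ p, (α p).2 = xor p.2 b) (i : Bool) :
    Function.Injective (fiberMap α i) := fun x y hxy =>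
  congrArg Prod.fst (α.injective (Prod.ext hxy (by rw [hb, hb])))

theorem isTwoFoldAut_fiberMap (hb : ∀ p, (α p).2 = xor p.2 b) :
    IsTwoFoldAut X (fiberMap α false) (fiberMap α true) := fun x y => by
  have hne : (α (x, false)).2 ≠ (α (y, true)).2 := by
    rw [hb, hb]
    cases b <;> simp
  exact ⟨fun hxy => (α.map_adj_iff.mp ⟨hxy, hne⟩).1,
    fun hxy => (α.map_adj_iff.mpr ⟨hxy, Bool.false_ne_true⟩).1⟩

theorem isExpected_of_fiberMap_eq (hb : ∀ p, (α p).2 = xor p.2 b)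
    (h : fiberMap α true = fiberMap α false) : IsExpected X α := by
  have hfib : ∀ p : V × Bool, fiberMap α false p.1 = (α p).1 := by
    rintro ⟨x, _ | _⟩
    · rfl
    · exact congrFun h.symm x
  have hbij : Function.Bijective (fiberMap α false) :=
    ⟨fiberMap_injective α hb false,
      fun y => ⟨(α.symm (y, b)).1, by rw [hfib, α.apply_symm_apply]⟩⟩
  have hadj : ∀ x y, X.Adj (fiberMap α false x) (fiberMap α false y) ↔ X.Adj x y := by
    intro x y
    rw [← congrFun h y]
    exact isTwoFoldAut_fiberMap α hb x y
  exact ⟨⟨Equiv.ofBijective _ hbij, hadj _ _⟩, b, fun p => Prod.ext (hfib p).symm (hb p)⟩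

end SimpleGraph

theorem stable_srg_lambda_ne_mu_general {V : Type*} [Fintype V] (X : SimpleGraph V)
    [DecidableRel X.Adj] (n k l m : ℕ)
    (hsrg : X.IsSRGWith n k l m) (hdiam : X.diam = 2)
    (hk : m < k) (hne : m ≠ l) (hl : 1 ≤ l) :
    IsStable X := by
  intro α
  obtain ⟨b, hb⟩ := exists_snd_apply_eq_xor
    (fun _ _ => hsrg.commonNeighbors_nonempty hl (ediam_eq_of_diam_eq two_ne_zero hdiam).le) α
  have hbij (i : Bool) : Function.Bijective (fiberMap α i) :=
    Finite.injective_iff_bijective.mp (fiberMap_injective α hb i)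
  have htwo := isTwoFoldAut_fiberMap α hb
  have haut := hsrg.adj_iff_of_isTwoFoldAut hne.symm htwo (hbij false).1 (hbij true)
  exact isExpected_of_fiberMap_eq α hb
    (htwo.eq_of_twinFree (hsrg.twinFree hk.ne) (hbij false).2 haut)

theorem stable_srg_lambda_ne_mu {V : Type*} [Fintype V] (X : SimpleGraph V)
    [DecidableRel X.Adj] (n k l m : ℕ)
    (hsrg : X.IsSRGWith n k l m) (hconn : X.Connected) (hdiam : X.diam = 2)
    (hk : m < k) (hne : m ≠ l) (hl : 1 ≤ l) :
    IsStable X :=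
  stable_srg_lambda_ne_mu_general X n k l m hsrg hdiam hk hne hl
end
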